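/- arXiv:1809.04718 — 6 statements merged into one kernel-verified Lean document; each statement's English description precedes it below -/
import Mathlib

section
/- Let V be a linear subspace of ℝ^n of dimension at most ℓ. Then the number of vectors in V all of whose coordinates are ±1 is at most 2^ℓ. -/
/-!
The coordinate functionals `x ↦ x i`, restricted to `V`, contain a linearly independent
subfamily with the same span; it has at most `dim V` members, and a vector of `V` on which they
all vanish is killed by every coordinate. So a `±1` vector of `V` is determined by its entries at
these at most `dim V` coordinates, which leaves at most `2 ^ dim V` possibilities.
-/

open Module Set

namespace Submodule

variable {ι : Type*}

theorem exists_finset_card_le_finrank_forall_eq_zero {K : Type*} [Field K]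
    (V : Submodule K (ι → K)) [FiniteDimensional K V] :
    ∃ s : Finset ι, s.card ≤ finrank K V ∧
      ∀ x ∈ V, (∀ i ∈ s, x i = 0) → x = 0 := by
  let coord : ι → Dual K V := fun i => (LinearMap.proj i).comp V.subtype
  obtain ⟨b, -, -, hspan, hli⟩ :=
    exists_linearIndepOn_extension (linearIndepOn_empty K coord) (empty_subset univ)
  have : Finite b := hli.finite_of_isNoetherian
  have := Fintype.ofFinite b
  refine ⟨b.toFinset, ?_, fun x hx hs => ?_⟩
  · rw [toFinset_card, ← Subspace.dual_finrank_eq]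
    exact hli.fintype_card_le_finrank
  · have hb : coord '' b ⊆ (LinearMap.ker (Dual.eval K V ⟨x, hx⟩) : Set (Dual K V)) :=
      image_subset_iff.mpr fun i hi => by simpa [coord] using hs i (mem_toFinset.mpr hi)
    funext i
    exact span_le.mpr hb (hspan (mem_image_of_mem coord (mem_univ i)))

theorem ncard_setOf_mem_forall_mem_le {R : Type*} [Ring R] (V : Submodule R (ι → R))
    (s : Finset ι) (hs : ∀ x ∈ V, (∀ i ∈ s, x i = 0) → x = 0) (A : Finset R) :
    {x | x ∈ V ∧ ∀ i, x i ∈ A}.ncard ≤ A.card ^ s.card := by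
  classical
  have hinj : InjOn (fun x (i : s) => x i) {x | x ∈ V ∧ ∀ i, x i ∈ A} := by
    intro x hx y hy hxy
    refine sub_eq_zero.mp <| hs (x - y) (V.sub_mem hx.1 hy.1) fun i hi => ?_
    simpa [sub_eq_zero] using congrFun hxy ⟨i, hi⟩
  have hmaps : ∀ x ∈ {x | x ∈ V ∧ ∀ i, x i ∈ A},
      (fun (i : s) => x i) ∈ (Fintype.piFinset fun _ : s => A : Set (s → R)) := by
    intro x hx
    simpa using fun i _ => hx.2 i
  calc _ ≤ (Fintype.piFinset fun _ : s => A : Set (s → R)).ncard :=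
        ncard_le_ncard_of_injOn _ hmaps hinj (Finset.finite_toSet _)
    _ = A.card ^ s.card := by rw [ncard_coe_finset, Fintype.card_piFinset]; simp

end Submodule

theorem stmt_0 {n ℓ : ℕ} (V : Submodule ℝ (Fin n → ℝ))
    (hV : Module.finrank ℝ V ≤ ℓ) :
    {x : Fin n → ℝ | x ∈ V ∧ ∀ i, x i = 1 ∨ x i = -1}.ncard ≤ 2 ^ ℓ := by
  obtain ⟨s, hs, hzero⟩ := V.exists_finset_card_le_finrank_forall_eq_zero
  have hsigns := V.ncard_setOf_mem_forall_mem_le s hzero ({1, -1} : Finset ℝ)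
  calc _ ≤ ({1, -1} : Finset ℝ).card ^ s.card := by simpa using hsigns
    _ = 2 ^ s.card := by rw [Finset.card_pair (by norm_num)]
    _ ≤ 2 ^ ℓ := Nat.pow_le_pow_right two_pos (hs.trans hV)
end

section
/- Let Y and Z be independent random variables taking finitely many values, and let E = E(Y,Z) be an event depending on Y and Z. Let Y′, Z′ be independent copies of Y, Z respectively (all four independent). Then P[E(Y,Z)]^4 ≤ P[E(Y,Z) ∩ E(Y′,Z) ∩ E(Y,Z′) ∩ E(Y′,Z′)]. -/
/-!
With `f` the indicator of `E` and `g z = ∫ f (y, z) dy`, Fubini gives `P[E] = ∫ g`,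
`∫ g² = ∫∫ d` and that the fourfold event has probability `∫∫ d²`, where
`d y y' = ∫ f (y, z) f (y', z) dz`. Jensen's inequality `(∫ h)² ≤ ∫ h²`, applied in `z`,
then in `y` and in `y'`, yields
`P[E]⁴ ≤ (∫ g²)² = (∫∫ d)² ≤ ∫∫ d²`.
-/

open MeasureTheory ENNReal

theorem sq_lintegral_le_lintegral_sq {γ : Type*} [MeasurableSpace γ] (μ : Measure γ)
    [IsProbabilityMeasure μ] {g : γ → ℝ≥0∞} (hg : AEMeasurable g μ) :
    (∫⁻ x, g x ∂μ) ^ 2 ≤ ∫⁻ x, g x ^ 2 ∂μ := by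
  have h := lintegral_mul_norm_pow_le (hg.pow_const 2) (aemeasurable_const (b := (1 : ℝ≥0∞)))
    (p := (2 : ℕ)⁻¹) (q := (2 : ℕ)⁻¹) (by norm_num) (by norm_num) (by norm_num)
  simp only [one_rpow, mul_one, lintegral_one, measure_univ,
    pow_rpow_inv_natCast two_ne_zero] at h
  calc (∫⁻ x, g x ∂μ) ^ 2 ≤ ((∫⁻ x, g x ^ 2 ∂μ) ^ ((2 : ℕ)⁻¹ : ℝ)) ^ 2 := by gcongr
    _ = ∫⁻ x, g x ^ 2 ∂μ := rpow_inv_natCast_pow two_ne_zero _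

section Fubini

variable {α β : Type*} [MeasurableSpace α] [MeasurableSpace β]
  {μ : Measure α} {ν : Measure β} [SFinite μ] [SFinite ν]

theorem lintegral_sq_lintegral {f : α × β → ℝ≥0∞} (hf : Measurable f) :
    ∫⁻ z, (∫⁻ y, f (y, z) ∂μ) ^ 2 ∂ν = ∫⁻ y, ∫⁻ y', ∫⁻ z, f (y, z) * f (y', z) ∂ν ∂μ ∂μ := by
  have hsq : ∀ z, (∫⁻ y, f (y, z) ∂μ) ^ 2 = ∫⁻ y, ∫⁻ y', f (y, z) * f (y', z) ∂μ ∂μ := fun z => by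
    rw [sq, lintegral_lintegral_mul (by fun_prop) (by fun_prop)]
  simp_rw [hsq]
  rw [lintegral_lintegral_swap (by fun_prop)]
  exact lintegral_congr fun y => lintegral_lintegral_swap (by fun_prop)

theorem lintegral_fourCycle {f : α × β → ℝ≥0∞} (hf : Measurable f) :
    ∫⁻ ω, (f (ω.1, ω.2.1) * f (ω.2.2.1, ω.2.1)) * (f (ω.1, ω.2.2.2) * f (ω.2.2.1, ω.2.2.2))
        ∂(μ.prod (ν.prod (μ.prod ν))) =
      ∫⁻ y, ∫⁻ y', (∫⁻ z, f (y, z) * f (y', z) ∂ν) ^ 2 ∂μ ∂μ := by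
  rw [lintegral_prod _ (by fun_prop)]
  refine lintegral_congr fun y => ?_
  rw [lintegral_prod _ (by fun_prop),
    lintegral_sq_lintegral (f := fun p : β × α => f (y, p.1) * f (p.2, p.1)) (by fun_prop)]
  refine lintegral_congr fun z => ?_
  rw [lintegral_prod _ (by fun_prop), lintegral_lintegral_swap (by fun_prop)]

end Fubini

theorem stmt_3_general {α β : Type*}
    [MeasurableSpace α] [MeasurableSpace β]
    (μY : Measure α) (μZ : Measure β)
    [IsProbabilityMeasure μY] [IsProbabilityMeasure μZ]
    (E : Set (α × β)) (hE : MeasurableSet E) :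
    ((μY.prod μZ) E) ^ 4 ≤
      (μY.prod (μZ.prod (μY.prod μZ)))
        {ω : α × β × α × β |
          (ω.1, ω.2.1) ∈ E ∧ (ω.2.2.1, ω.2.1) ∈ E ∧
          (ω.1, ω.2.2.2) ∈ E ∧ (ω.2.2.1, ω.2.2.2) ∈ E} := by
  set f : α × β → ℝ≥0∞ := E.indicator 1
  have hf : Measurable f := measurable_one.indicator hE
  have hmass : μY.prod μZ E = ∫⁻ z, ∫⁻ y, f (y, z) ∂μY ∂μZ := by
    rw [← lintegral_indicator_one hE, lintegral_prod_symm' _ hf]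
  have hcycle : (μY.prod (μZ.prod (μY.prod μZ)))
        {ω : α × β × α × β | (ω.1, ω.2.1) ∈ E ∧ (ω.2.2.1, ω.2.1) ∈ E ∧
          (ω.1, ω.2.2.2) ∈ E ∧ (ω.2.2.1, ω.2.2.2) ∈ E} =
      ∫⁻ y, ∫⁻ y', (∫⁻ z, f (y, z) * f (y', z) ∂μZ) ^ 2 ∂μY ∂μY := by
    rw [← lintegral_fourCycle hf, ← lintegral_indicator_one (by measurability)]
    congr 1 with ω
    simp only [f, Set.indicator]
    split_ifs <;> simp_all
  calc ((μY.prod μZ) E) ^ 4 = ((∫⁻ z, ∫⁻ y, f (y, z) ∂μY ∂μZ) ^ 2) ^ 2 := by rw [hmass]; ring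
    _ ≤ (∫⁻ z, (∫⁻ y, f (y, z) ∂μY) ^ 2 ∂μZ) ^ 2 := by
      gcongr; exact sq_lintegral_le_lintegral_sq μZ (by fun_prop)
    _ = (∫⁻ y, ∫⁻ y', ∫⁻ z, f (y, z) * f (y', z) ∂μZ ∂μY ∂μY) ^ 2 := by
      rw [lintegral_sq_lintegral hf]
    _ ≤ ∫⁻ y, (∫⁻ y', ∫⁻ z, f (y, z) * f (y', z) ∂μZ ∂μY) ^ 2 ∂μY :=
      sq_lintegral_le_lintegral_sq μY (by fun_prop)
    _ ≤ ∫⁻ y, ∫⁻ y', (∫⁻ z, f (y, z) * f (y', z) ∂μZ) ^ 2 ∂μY ∂μY :=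
      lintegral_mono fun y => sq_lintegral_le_lintegral_sq μY (by fun_prop)
    _ = _ := hcycle.symm

theorem stmt_3 {α β : Type*} [Fintype α] [Fintype β]
    [MeasurableSpace α] [MeasurableSpace β]
    (μY : Measure α) (μZ : Measure β)
    [IsProbabilityMeasure μY] [IsProbabilityMeasure μZ]
    (E : Set (α × β)) (hE : MeasurableSet E) :
    ((μY.prod μZ) E) ^ 4 ≤
      (μY.prod (μZ.prod (μY.prod μZ)))
        {ω : α × β × α × β |
          (ω.1, ω.2.1) ∈ E ∧ (ω.2.2.1, ω.2.1) ∈ E ∧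
          (ω.1, ω.2.2.2) ∈ E ∧ (ω.2.2.1, ω.2.2.2) ∈ E} :=
  stmt_3_general μY μZ E hE
end

section
/- Let 𝔯 be a ring, a ∈ 𝔯^n, let [n] = U₁ ⊔ U₂ be a partition, and 0 ≤ μ ≤ 1. Then ρ_μ(a|_{U₁}) ≤ max{μ, (1−μ)/2}^{−|U₂|} · ρ_μ(a), where ρ_μ denotes the μ-atom probability. -/
/-- The μ-atom probability of a vector `a` over a ring `R`. -/
noncomputable def atomProb (R : Type*) [Ring R] [DecidableEq R] (μ : ℝ)
    {ι : Type*} [Fintype ι] [DecidableEq ι] (a : ι → R) : ℝ :=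
  ⨆ c : R, ∑ x : ι → ({-1, 0, 1} : Finset ℤ),
    (∏ i, (if (x i : ℤ) = 0 then μ else (1 - μ) / 2)) *
      (if (∑ i, a i * ((x i : ℤ) : R)) = c then 1 else 0)

theorem stmt_5 (R : Type*) [Ring R] [DecidableEq R] (μ : ℝ)
    (hμ0 : 0 ≤ μ) (hμ1 : μ ≤ 1)
    {n : ℕ} (a : Fin n → R) (U₁ U₂ : Finset (Fin n))
    (hdisj : Disjoint U₁ U₂) (hunion : U₁ ∪ U₂ = Finset.univ) :
    atomProb R μ (fun i : U₁ => a i) ≤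
      (max μ ((1 - μ) / 2)) ^ (-(U₂.card : ℤ)) * atomProb R μ a := by
  classical
  set M := max μ ((1 - μ) / 2) with hM
  have hμ2 : (0:ℝ) ≤ (1 - μ) / 2 := by linarith
  have hMμ : μ ≤ M := le_max_left _ _
  have hM2 : (1 - μ) / 2 ≤ M := le_max_right _ _
  have hMpos : 0 < M := by linarith
  set k := U₂.card with hk
  have hMk : (0:ℝ) < M ^ k := pow_pos hMpos k
  set w : ({-1, 0, 1} : Finset ℤ) → ℝ :=
    fun s => if (s : ℤ) = 0 then μ else (1 - μ) / 2 with hw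
  have hwnn : ∀ s, 0 ≤ w s := fun s => by
    by_cases h : (s : ℤ) = 0 <;> simp [hw, h, hμ0, hμ2]
  obtain ⟨y₀, hy₀⟩ : ∃ y : ({-1, 0, 1} : Finset ℤ), w y = M := by
    rcases le_total ((1 - μ) / 2) μ with h | h
    · exact ⟨⟨0, by decide⟩, by simp [hw, hM, max_eq_left h]⟩
    · exact ⟨⟨1, by decide⟩, by simp [hw, hM, max_eq_right h]⟩
  set P : R → ℝ := fun c => ∑ x : Fin n → ({-1, 0, 1} : Finset ℤ),
    (∏ i, w (x i)) * (if (∑ i, a i * ((x i : ℤ) : R)) = c then 1 else 0) with hP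
  set P₁ : R → ℝ := fun c => ∑ x : U₁ → ({-1, 0, 1} : Finset ℤ),
    (∏ i, w (x i)) * (if (∑ i : U₁, a i * ((x i : ℤ) : R)) = c then 1 else 0) with hP1
  have hA : atomProb R μ a = ⨆ c, P c := rfl
  have hA1 : atomProb R μ (fun i : U₁ => a i) = ⨆ c, P₁ c := rfl
  have htnn : ∀ (x : Fin n → ({-1, 0, 1} : Finset ℤ)) (c : R),
      0 ≤ (∏ i, w (x i)) * (if (∑ i, a i * ((x i : ℤ) : R)) = c then 1 else 0) := by
    intro x c
    apply mul_nonneg (Finset.prod_nonneg fun i _ => hwnn (x i))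
    split_ifs <;> norm_num
  have hPle : ∀ c, P c ≤ ∑ x : Fin n → ({-1, 0, 1} : Finset ℤ), ∏ i, w (x i) := by
    intro c
    apply Finset.sum_le_sum
    intro x _
    have h1 := Finset.prod_nonneg fun i (_ : i ∈ Finset.univ) => hwnn (x i)
    split_ifs <;> simp [h1]
  have hbdd : BddAbove (Set.range P) := ⟨_, by rintro _ ⟨c, rfl⟩; exact hPle c⟩
  have hPnn : ∀ c, 0 ≤ P c := fun c => Finset.sum_nonneg fun x _ => htnn x c
  set E : (U₁ → ({-1, 0, 1} : Finset ℤ)) → (Fin n → ({-1, 0, 1} : Finset ℤ)) :=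
    fun x i => if h : i ∈ U₁ then x ⟨i, h⟩ else y₀ with hE
  have hE_inj : Function.Injective E := by
    intro x x' h
    funext i
    have h2 := congrFun h i.1
    simp only [hE] at h2
    rw [dif_pos i.2, dif_pos i.2] at h2
    simpa using h2
  set s : R := ∑ i ∈ U₂, a i * ((y₀ : ℤ) : R) with hs
  have huniv : (Finset.univ : Finset (Fin n)) = U₁ ∪ U₂ := hunion.symm
  have key : ∀ c : R, M ^ k * P₁ c ≤ P (c + s) := by
    intro c
    have hW : ∀ x : U₁ → ({-1, 0, 1} : Finset ℤ),
        ∏ i, w (E x i) = (∏ i, w (x i)) * M ^ k := by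
      intro x
      rw [show (∏ i, w (E x i)) = ∏ i ∈ Finset.univ, w (E x i) from rfl,
        huniv, Finset.prod_union hdisj]
      congr 1
      · rw [← Finset.prod_attach U₁ (fun i => w (E x i)), Finset.univ_eq_attach]
        apply Finset.prod_congr rfl
        intro i _
        simp only [hE]
        rw [dif_pos i.2]
      · have h3 : ∀ i ∈ U₂, w (E x i) = M := by
          intro i hi
          have hiU1 : i ∉ U₁ := Finset.disjoint_right.mp hdisj hi
          simp only [hE]
          rw [dif_neg hiU1, hy₀]
        rw [Finset.prod_congr rfl h3, Finset.prod_const, hk]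
    have hS : ∀ x : U₁ → ({-1, 0, 1} : Finset ℤ),
        (∑ i, a i * ((E x i : ℤ) : R)) = (∑ i : U₁, a i * ((x i : ℤ) : R)) + s := by
      intro x
      rw [show (∑ i, a i * ((E x i : ℤ) : R)) = ∑ i ∈ Finset.univ, a i * ((E x i : ℤ) : R) from rfl,
        huniv, Finset.sum_union hdisj]
      congr 1
      · rw [← Finset.sum_attach U₁ (fun i => a i * ((E x i : ℤ) : R)), Finset.univ_eq_attach]
        apply Finset.sum_congr rfl
        intro i _
        simp only [hE]
        rw [dif_pos i.2]
      · rw [hs]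
        apply Finset.sum_congr rfl
        intro i hi
        have hiU1 : i ∉ U₁ := Finset.disjoint_right.mp hdisj hi
        simp only [hE]
        rw [dif_neg hiU1]
    calc M ^ k * P₁ c
        = ∑ x : U₁ → ({-1, 0, 1} : Finset ℤ), (∏ i, w (E x i)) *
            (if (∑ i, a i * ((E x i : ℤ) : R)) = c + s then 1 else 0) := by
          rw [hP1, Finset.mul_sum]
          apply Finset.sum_congr rfl
          intro x _
          rw [hW x, hS x, if_congr (add_left_inj s) rfl rfl]
          ring
      _ = ∑ x ∈ Finset.univ.map ⟨E, hE_inj⟩, (∏ i, w (x i)) *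
            (if (∑ i, a i * ((x i : ℤ) : R)) = c + s then 1 else 0) :=
          (Finset.sum_map Finset.univ ⟨E, hE_inj⟩ (fun x => (∏ i, w (x i)) *
            (if (∑ i, a i * ((x i : ℤ) : R)) = c + s then 1 else 0))).symm
      _ ≤ P (c + s) := by
          rw [hP]
          exact Finset.sum_le_sum_of_subset_of_nonneg (Finset.subset_univ _)
            (fun x _ _ => htnn x (c + s))
  have hAle : ∀ c, P₁ c ≤ (M ^ k)⁻¹ * atomProb R μ a := by
    intro c
    rw [hA, le_inv_mul_iff₀ hMk]
    exact (key c).trans (le_ciSup hbdd (c + s))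
  have h0 : 0 ≤ (M ^ k)⁻¹ * atomProb R μ a := by
    apply mul_nonneg (inv_nonneg.mpr hMk.le)
    rw [hA]
    exact (hPnn 0).trans (le_ciSup hbdd 0)
  rw [hA1, zpow_neg, zpow_natCast]
  exact Real.iSup_le hAle h0
end

section
/- Let p be prime, a ∈ 𝔽_p^n, and k ∈ ℕ with k ≤ n. Define R_k(a) as the number of 2k-tuples (i₁,…,i_{2k}) ∈ [n]^{2k} together with signs (ε₁,…,ε_{2k}) ∈ {±1}^{2k} such that ε₁a_{i₁} + ⋯ + ε_{2k}a_{i_{2k}} = 0 in 𝔽_p, and R_k^*(a) as the number of such solutions having at least one non-repeated index. Then R_k(a) ≤ R_k^*(a) + (16k)^k · n^k. -/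
/-- `Rk p k a` : the number of signed `2k`-term solutions
`ε₁ a_{i₁} + ⋯ + ε_{2k} a_{i_{2k}} = 0` in `𝔽_p`, repetitions allowed. -/
noncomputable def Rk (p : ℕ) {ι : Type*} [Fintype ι] (k : ℕ) (a : ι → ZMod p) : ℕ :=
  Nat.card {x : (Fin (2 * k) → ι) × (Fin (2 * k) → ℤˣ) //
    (∑ l, ((x.2 l : ℤ) : ZMod p) * a (x.1 l)) = 0}

/-- `RkStar p k a` : as `Rk`, but counting only solutions with at least one
non-repeated index. -/
noncomputable def RkStar (p : ℕ) {ι : Type*} [Fintype ι] (k : ℕ) (a : ι → ZMod p) : ℕ :=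
  Nat.card {x : (Fin (2 * k) → ι) × (Fin (2 * k) → ℤˣ) //
    (∑ l, ((x.2 l : ℤ) : ZMod p) * a (x.1 l)) = 0 ∧
    ∃ l, ∀ l', x.1 l' = x.1 l → l' = l}

open Finset

lemma aux_pow_le (k : ℕ) : k ^ k ≤ 4 ^ k * k.factorial := by
  have h1 : (k+1) ^ k ≤ (k+1).ascFactorial k := Nat.pow_succ_le_ascFactorial _ _
  have h2 : k.factorial * (k+1).ascFactorial k = (k+k).factorial :=
    Nat.factorial_mul_ascFactorial k k
  have h3 : (k+k).choose k * k.factorial * k.factorial = (k+k).factorial := by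
    have := Nat.choose_mul_factorial_mul_factorial (Nat.le_add_right k k)
    simpa using this
  have h4 : (k+k).choose k ≤ 2 ^ (k+k) := by
    calc (k+k).choose k ≤ ∑ i ∈ range (k+k+1), (k+k).choose i :=
          Finset.single_le_sum (fun i _ => Nat.zero_le _) (by simp)
      _ = 2 ^ (k+k) := Nat.sum_range_choose _
  have h5 : (2:ℕ) ^ (k+k) = 4 ^ k := by
    rw [show k+k = 2*k by ring, pow_mul]; norm_num
  have h6 : k.factorial * (k ^ k) ≤ k.factorial * (4 ^ k * k.factorial) := by
    calc k.factorial * k ^ k ≤ k.factorial * (k+1).ascFactorial k :=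
          Nat.mul_le_mul_left _ (le_trans (Nat.pow_le_pow_left (Nat.le_succ k) k) h1)
      _ = (k+k).factorial := h2
      _ = (k+k).choose k * k.factorial * k.factorial := h3.symm
      _ ≤ 2 ^ (k+k) * k.factorial * k.factorial :=
          Nat.mul_le_mul_right _ (Nat.mul_le_mul_right _ h4)
      _ = k.factorial * (4 ^ k * k.factorial) := by rw [h5]; ring
  exact Nat.le_of_mul_le_mul_left h6 k.factorial_pos

/-- counting functions all of whose values repeat -/
lemma aux_count {n k : ℕ} (hk : k ≤ n) :
    (univ.filter fun f : Fin (2*k) → Fin n => ∀ l, ∃ l', f l' = f l ∧ l' ≠ l).card ≤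
      n.choose k * k ^ (2*k) := by
  classical
  have hsub : (univ.filter fun f : Fin (2*k) → Fin n => ∀ l, ∃ l', f l' = f l ∧ l' ≠ l) ⊆
      (powersetCard k (univ : Finset (Fin n))).biUnion
        (fun S => Fintype.piFinset fun _ : Fin (2*k) => S) := by
    intro f hf
    have hP : ∀ l, ∃ l', f l' = f l ∧ l' ≠ l := (mem_filter.1 hf).2
    set I := Finset.image f univ with hI
    have hcard : 2 * I.card ≤ 2 * k := by
      have hfib : ∀ y ∈ I, 2 ≤ (univ.filter fun l => f l = y).card := by
        intro y hy
        obtain ⟨l, -, hl⟩ := Finset.mem_image.1 hy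
        obtain ⟨l', hfl', hne⟩ := hP l
        have hss : ({l', l} : Finset (Fin (2*k))) ⊆ univ.filter fun t => f t = y := by
          intro t ht
          simp only [mem_insert, mem_singleton] at ht
          rcases ht with h | h <;> subst h <;> simp [hl, hfl'.trans hl]
        calc 2 = ({l', l} : Finset (Fin (2*k))).card := by
              rw [Finset.card_insert_of_notMem (by simp [hne]), Finset.card_singleton]
          _ ≤ _ := Finset.card_le_card hss
      have hfw : (univ : Finset (Fin (2*k))).card = ∑ y ∈ I, (univ.filter fun l => f l = y).card :=
        Finset.card_eq_sum_card_fiberwise (fun x _ => Finset.mem_image_of_mem f (mem_univ x))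
      calc 2 * I.card = ∑ _y ∈ I, 2 := by rw [sum_const, smul_eq_mul, mul_comm]
        _ ≤ ∑ y ∈ I, (univ.filter fun l => f l = y).card := Finset.sum_le_sum hfib
        _ = (univ : Finset (Fin (2*k))).card := hfw.symm
        _ = 2 * k := by simp
    have hIk : I.card ≤ k := by omega
    obtain ⟨T, hIT, hTu, hTc⟩ := Finset.exists_subsuperset_card_eq (Finset.subset_univ I) hIk
      (by simpa using hk)
    exact Finset.mem_biUnion.2 ⟨T, Finset.mem_powersetCard.2 ⟨hTu, hTc⟩,
      Fintype.mem_piFinset.2 fun l => hIT (Finset.mem_image_of_mem f (mem_univ l))⟩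
  calc _ ≤ ((powersetCard k (univ : Finset (Fin n))).biUnion
        (fun S => Fintype.piFinset fun _ : Fin (2*k) => S)).card := Finset.card_le_card hsub
    _ ≤ ∑ S ∈ powersetCard k (univ : Finset (Fin n)),
        (Fintype.piFinset fun _ : Fin (2*k) => S).card := Finset.card_biUnion_le
    _ = ∑ S ∈ powersetCard k (univ : Finset (Fin n)), k ^ (2*k) := by
        refine Finset.sum_congr rfl fun S hS => ?_
        rw [Fintype.card_piFinset]
        simp [(Finset.mem_powersetCard.1 hS).2]
    _ = n.choose k * k ^ (2*k) := by
        rw [Finset.sum_const, smul_eq_mul, Finset.card_powersetCard]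
        simp

theorem stmt_8 {p n k : ℕ} (hp : p.Prime) (hk : k ≤ n) (a : Fin n → ZMod p) :
    Rk p k a ≤ RkStar p k a + (16 * k) ^ k * n ^ k := by
  classical
  set E : (Fin (2*k) → Fin n) × (Fin (2*k) → ℤˣ) → Prop :=
    fun x => (∑ l, ((x.2 l : ℤ) : ZMod p) * a (x.1 l)) = 0 with hE
  set N : (Fin (2*k) → Fin n) × (Fin (2*k) → ℤˣ) → Prop :=
    fun x => ∃ l, ∀ l', x.1 l' = x.1 l → l' = l with hN
  have hRk : Rk p k a = (univ.filter E).card := by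
    rw [Rk, Nat.card_eq_fintype_card, Fintype.card_subtype]
  have hRkS : RkStar p k a = (univ.filter fun x => E x ∧ N x).card := by
    rw [RkStar, Nat.card_eq_fintype_card, Fintype.card_subtype]
  -- split
  have hsplit : (univ.filter E).card ≤
      (univ.filter fun x => E x ∧ N x).card + (univ.filter fun x => ¬ N x).card := by
    calc (univ.filter E).card
        ≤ ((univ.filter fun x => E x ∧ N x) ∪ (univ.filter fun x => ¬ N x)).card := by
          refine Finset.card_le_card fun x hx => ?_
          simp only [mem_union, mem_filter, mem_univ, true_and] at *
          by_cases h : N x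
          · exact Or.inl ⟨hx, h⟩
          · exact Or.inr h
      _ ≤ _ := Finset.card_union_le _ _
  -- the bad set only depends on the first coordinate
  have hprod : (univ.filter fun x : (Fin (2*k) → Fin n) × (Fin (2*k) → ℤˣ) => ¬ N x) =
      (univ.filter fun f : Fin (2*k) → Fin n => ∀ l, ∃ l', f l' = f l ∧ l' ≠ l) ×ˢ
        (univ : Finset (Fin (2*k) → ℤˣ)) := by
    ext ⟨f, e⟩
    simp only [mem_filter, mem_product, mem_univ, true_and, and_true, hN]
    push_neg
    rfl
  have hcard2 : Fintype.card (Fin (2*k) → ℤˣ) = 4 ^ k := by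
    rw [Fintype.card_fun, show Fintype.card ℤˣ = 2 from rfl, Fintype.card_fin,
      show 2*k = k*2 by ring, pow_mul, ← pow_mul, show k*2 = 2*k by ring, pow_mul]
    norm_num
  have hbad : (univ.filter fun x : (Fin (2*k) → Fin n) × (Fin (2*k) → ℤˣ) => ¬ N x).card ≤
      n.choose k * k ^ (2*k) * 4 ^ k := by
    rw [hprod, Finset.card_product]
    simp only [card_univ]
    rw [hcard2]
    exact Nat.mul_le_mul_right _ (aux_count hk)
  -- final arithmetic
  have harith : n.choose k * k ^ (2*k) * 4 ^ k ≤ (16 * k) ^ k * n ^ k := by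
    have h1 : k ^ (2*k) = k ^ k * k ^ k := by rw [two_mul, pow_add]
    have h2 : n.choose k * k.factorial ≤ n ^ k := by
      calc n.choose k * k.factorial ≤ n.descFactorial k := by
            rw [Nat.descFactorial_eq_factorial_mul_choose]; rw [mul_comm]
        _ ≤ n ^ k := Nat.descFactorial_le_pow n k
    calc n.choose k * k ^ (2*k) * 4 ^ k
        = n.choose k * (k ^ k * k ^ k) * 4 ^ k := by rw [h1]
      _ ≤ n.choose k * ((4 ^ k * k.factorial) * k ^ k) * 4 ^ k := by
          exact Nat.mul_le_mul_right _ (Nat.mul_le_mul_left _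
            (Nat.mul_le_mul_right _ (aux_pow_le k)))
      _ = (n.choose k * k.factorial) * (16 ^ k * k ^ k) := by
          rw [show (16:ℕ) ^ k = 4 ^ k * 4 ^ k by rw [← mul_pow]; norm_num]; ring
      _ ≤ n ^ k * (16 ^ k * k ^ k) := Nat.mul_le_mul_right _ h2
      _ = (16 * k) ^ k * n ^ k := by rw [mul_pow]; ring
  rw [hRk, hRkS]
  calc (univ.filter E).card
      ≤ (univ.filter fun x => E x ∧ N x).card + (univ.filter fun x => ¬ N x).card := hsplit
    _ ≤ (univ.filter fun x => E x ∧ N x).card + (16 * k) ^ k * n ^ k :=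
        Nat.add_le_add_left (le_trans hbad harith) _
end

section
/- Let p be a prime and let k ∈ ℕ, s₁, s₂, d ∈ [n], t ∈ [p] with s₁ ≤ s₂. Define B^d_{k,s₁,s₂,≥t}(n) as the set of a ∈ 𝔽_p^n with |supp(a)| = d such that every subset b of the coordinates of a contained in supp(a) with s₁ ≤ |b| ≤ s₂ satisfies R_k^*(b) ≥ t · 2^{2k}|b|^{2k}/p. Then |B^d_{k,s₁,s₂,≥t}(n)| ≤ C(n,d) · p^{d+s₂} · t^{−d + (s₁/s₂)d}. -/
/-!
Fix the support `F` and a subset `T ⊆ F` with `s₁ ≤ |T| ≤ s₂`. Every rich vector supported on `F`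
has at least `t (2|T|)^{2k} / p` signed solutions on `T`. Conversely, a signed solution with a
non-repeated index `u` is solved by at most as many rich vectors supported on `F` as there are
rich vectors supported on `F \ {u}`, because the solution determines `a u` from the other
coordinates. Double counting over the `(2|T|)^{2k}` candidate solutions and induction on `F` show
that at most `p^{|F|} / t^{|F|+1-s₁}` rich vectors have support `F`; summing over the `C(n,d)`
supports and trading at most `s₂` powers of `t ≤ p` for powers of `p` yields the bound.
-/

open Finset

theorem eq_of_update_eq_of_sum_mul_eq_zero {ι κ R : Type*} [DecidableEq ι] [Fintype κ]
    [DecidableEq κ] [Ring R] {c : κ → R} {x : κ → ι} {l₀ : κ} (hc : IsUnit (c l₀))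
    (hx : ∀ l, x l = x l₀ → l = l₀) {a b : ι → R} (ha : ∑ l, c l * a (x l) = 0)
    (hb : ∑ l, c l * b (x l) = 0)
    (hab : Function.update a (x l₀) 0 = Function.update b (x l₀) 0) : a = b := by
  have off : ∀ i ≠ x l₀, a i = b i := fun i hi => by
    simpa [Function.update_of_ne hi] using congrFun hab i
  have rest : ∑ l ∈ univ.erase l₀, c l * a (x l) = ∑ l ∈ univ.erase l₀, c l * b (x l) :=
    sum_congr rfl fun l hl => by rw [off _ fun h => ne_of_mem_erase hl (hx l h)]
  rw [← add_sum_erase _ _ (mem_univ l₀)] at ha hb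
  have key : c l₀ * a (x l₀) = c l₀ * b (x l₀) := by
    rw [eq_neg_of_add_eq_zero_left ha, eq_neg_of_add_eq_zero_left hb, rest]
  funext i
  by_cases hi : i = x l₀
  · subst hi; exact hc.mul_left_cancel key
  · exact off i hi

theorem filter_update_ne_zero {ι R : Type*} [Fintype ι] [DecidableEq ι] [Zero R] [DecidableEq R]
    (a : ι → R) (u : ι) :
    ({i | Function.update a u 0 i ≠ 0} : Finset ι) = ({i | a i ≠ 0} : Finset ι).erase u := by
  ext i
  by_cases hi : i = u <;> simp [hi]

section SignedSolutions

variable {κ : Type*} [Fintype κ] {p : ℕ} (k : ℕ)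

def signedSolutions [DecidableEq κ] (b : κ → ZMod p) :
    Finset ((Fin (2 * k) → κ) × (Fin (2 * k) → ℤˣ)) :=
  {x | ∑ l, ((x.2 l : ℤ) : ZMod p) * b (x.1 l) = 0 ∧ ∃ l, ∀ l', x.1 l' = x.1 l → l' = l}

theorem RkStar_eq_card_signedSolutions [DecidableEq κ] (b : κ → ZMod p) :
    RkStar p k b = #(signedSolutions k b) := by
  rw [RkStar, Nat.card_eq_fintype_card, Fintype.card_subtype, signedSolutions]

theorem card_signedSolutions_domain :
    Fintype.card ((Fin (2 * k) → κ) × (Fin (2 * k) → ℤˣ)) = (2 * Fintype.card κ) ^ (2 * k) := by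
  rw [Fintype.card_prod, Fintype.card_fun, Fintype.card_fun, Fintype.card_units_int,
    Fintype.card_fin, mul_pow, mul_comm]

end SignedSolutions

section Rich

variable {ι : Type*} [Fintype ι] [DecidableEq ι] (p k s₁ s₂ t : ℕ)

/-- The defining condition of the paper's `B_{k,s₁,s₂,≥t}`. -/
def IsRich (a : ι → ZMod p) : Prop :=
  ∀ S : Finset ι, S ⊆ ({i | a i ≠ 0} : Finset ι) → s₁ ≤ #S → #S ≤ s₂ →
    (t : ℝ) * 2 ^ (2 * k) * (#S : ℝ) ^ (2 * k) / p ≤ RkStar p k (fun i : S => a i)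

open Classical in
noncomputable def richWithSupport [NeZero p] (F : Finset ι) : Finset (ι → ZMod p) :=
  {a | ({i | a i ≠ 0} : Finset ι) = F ∧ IsRich p k s₁ s₂ t a}

variable {p k s₁ s₂ t}

theorem IsRich.update_zero {a : ι → ZMod p} (ha : IsRich p k s₁ s₂ t a) (u : ι) :
    IsRich p k s₁ s₂ t (Function.update a u 0) := by
  intro S hS hS₁ hS₂
  rw [filter_update_ne_zero] at hS
  have hu : ∀ i : S, (i : ι) ≠ u := fun i => ne_of_mem_erase (hS i.2)
  simpa only [Function.update_of_ne (hu _)] using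
    ha S (hS.trans (erase_subset _ _)) hS₁ hS₂

variable [NeZero p]

theorem mem_richWithSupport {a : ι → ZMod p} {F : Finset ι} :
    a ∈ richWithSupport p k s₁ s₂ t F ↔ ({i | a i ≠ 0} : Finset ι) = F ∧ IsRich p k s₁ s₂ t a := by
  simp [richWithSupport]

theorem update_zero_mem_richWithSupport {a : ι → ZMod p} {F : Finset ι}
    (ha : a ∈ richWithSupport p k s₁ s₂ t F) (u : ι) :
    Function.update a u 0 ∈ richWithSupport p k s₁ s₂ t (F.erase u) := by
  rw [mem_richWithSupport] at ha ⊢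
  exact ⟨by rw [filter_update_ne_zero, ha.1], ha.2.update_zero u⟩

theorem card_richWithSupport_le (F : Finset ι) :
    #(richWithSupport p k s₁ s₂ t F) ≤ p ^ #F := by
  calc #(richWithSupport p k s₁ s₂ t F) ≤ #(univ : Finset (F → ZMod p)) := by
        refine card_le_card_of_injOn (fun a (i : F) => a i) (fun _ _ => mem_univ _) ?_
        intro a ha b hb hab
        rw [mem_coe, mem_richWithSupport] at ha hb
        funext i
        by_cases hi : i ∈ F
        · exact congrFun hab ⟨i, hi⟩
        · have hai : a i = 0 := by simpa [← ha.1] using hi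
          have hbi : b i = 0 := by simpa [← hb.1] using hi
          rw [hai, hbi]
    _ = p ^ #F := by simp

/-- A coordinate that occurs only once in a signed solution is determined by the others, so
zeroing it is injective on the vectors solving it. -/
theorem card_filter_mem_signedSolutions_le {F T : Finset ι}
    (x : (Fin (2 * k) → T) × (Fin (2 * k) → ℤˣ)) {l₀ : Fin (2 * k)}
    (hl₀ : ∀ l, x.1 l = x.1 l₀ → l = l₀) :
    #{a ∈ richWithSupport p k s₁ s₂ t F | x ∈ signedSolutions k (fun i : T => a i)} ≤
      #(richWithSupport p k s₁ s₂ t (F.erase (x.1 l₀))) := by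
  refine card_le_card_of_injOn (Function.update · (x.1 l₀) 0)
    (fun a ha => update_zero_mem_richWithSupport (mem_filter.1 ha).1 _) ?_
  intro a ha b hb hab
  simp only [coe_filter, signedSolutions, mem_filter, Set.mem_ofPred_eq] at ha hb
  exact eq_of_update_eq_of_sum_mul_eq_zero (x := fun l => (x.1 l : ι))
    ((x.2 l₀).isUnit.map (Int.castRingHom (ZMod p)))
    (fun l h => hl₀ l (Subtype.ext h)) ha.2.2.1 hb.2.2.1 hab

theorem card_richWithSupport_mul_le {F T : Finset ι} (hT : T.Nonempty) (hTF : T ⊆ F)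
    (hT₁ : s₁ ≤ #T) (hT₂ : #T ≤ s₂) {m : ℝ}
    (hm : ∀ u ∈ F, (#(richWithSupport p k s₁ s₂ t (F.erase u)) : ℝ) ≤ m) :
    (#(richWithSupport p k s₁ s₂ t F) : ℝ) * t ≤ p * m := by
  let r (a : ι → ZMod p) (x : (Fin (2 * k) → T) × (Fin (2 * k) → ℤˣ)) : Prop :=
    x ∈ signedSolutions k (fun i : T => a i)
  have many : ∀ a ∈ richWithSupport p k s₁ s₂ t F,
      t * (2 * #T : ℝ) ^ (2 * k) / p ≤ (#(univ.bipartiteAbove r a) : ℝ) := by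
    intro a ha
    rw [mem_richWithSupport] at ha
    have h := ha.2 T (ha.1 ▸ hTF) hT₁ hT₂
    rw [RkStar_eq_card_signedSolutions] at h
    simpa [bipartiteAbove, r, mul_pow, mul_assoc] using h
  have few : ∀ x ∈ univ, (#((richWithSupport p k s₁ s₂ t F).bipartiteBelow r x) : ℝ) ≤ m := by
    intro x _
    by_cases hx : ∃ l₀, ∀ l, x.1 l = x.1 l₀ → l = l₀
    · obtain ⟨l₀, hl₀⟩ := hx
      exact le_trans (by exact_mod_cast card_filter_mem_signedSolutions_le x hl₀)
        (hm _ (hTF (x.1 l₀).2))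
    · have : (richWithSupport p k s₁ s₂ t F).bipartiteBelow r x = ∅ :=
        filter_eq_empty_iff.2 fun a _ hax => hx (mem_filter.1 hax).2.2
      obtain ⟨u, hu⟩ := hT
      rw [this, card_empty, Nat.cast_zero]
      exact (Nat.cast_nonneg _).trans (hm u (hTF hu))
  have h := card_nsmul_le_card_nsmul r many few
  rw [nsmul_eq_mul, nsmul_eq_mul, card_univ, card_signedSolutions_domain,
    Fintype.card_coe] at h
  push_cast at h
  have hA : (0 : ℝ) < (2 * #T : ℝ) ^ (2 * k) := by
    have : 0 < #T := hT.card_pos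
    positivity
  have hp : (0 : ℝ) < p := by exact_mod_cast Nat.pos_of_neZero p
  rw [← mul_div_assoc, div_le_iff₀ hp] at h
  exact le_of_mul_le_mul_left (by linarith) hA

theorem card_richWithSupport_le_div (hs₁ : 1 ≤ s₁) (hs₁₂ : s₁ ≤ s₂) (ht : 0 < t)
    (F : Finset ι) :
    (#(richWithSupport p k s₁ s₂ t F) : ℝ) ≤ (p : ℝ) ^ #F / (t : ℝ) ^ (#F + 1 - s₁) := by
  induction F using Finset.strongInduction with | H F ih =>
  rcases lt_or_ge #F s₁ with hF | hF
  · rw [show #F + 1 - s₁ = 0 by omega, pow_zero, div_one]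
    exact_mod_cast card_richWithSupport_le F
  obtain ⟨T, hTF, hT⟩ := exists_subset_card_eq (min_le_left #F s₂)
  have hm : ∀ u ∈ F, (#(richWithSupport p k s₁ s₂ t (F.erase u)) : ℝ) ≤
      (p : ℝ) ^ (#F - 1) / (t : ℝ) ^ (#F - s₁) := fun u hu => by
    have := ih _ (erase_ssubset hu)
    rwa [card_erase_of_mem hu, show #F - 1 + 1 - s₁ = #F - s₁ by omega] at this
  have h := card_richWithSupport_mul_le (card_pos.1 (by omega)) hTF (by omega) (by omega) hm
  have ht' : (0 : ℝ) < t := by exact_mod_cast ht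
  rw [← mul_div_assoc, le_div_iff₀ (by positivity)] at h
  rw [le_div_iff₀ (by positivity), show #F + 1 - s₁ = #F - s₁ + 1 by omega, pow_succ,
    ← pow_sub_one_mul (by omega : #F ≠ 0)]
  linarith

end Rich

theorem pow_div_pow_le_pow_mul_rpow {p t c : ℝ} {d e s : ℕ} (ht : 1 ≤ t) (htp : t ≤ p)
    (hc : 0 ≤ c) (hd : d ≤ e + s) :
    p ^ d / t ^ e ≤ p ^ (d + s) * t ^ (-(d : ℝ) + c) := by
  have ht₀ : 0 < t := by linarith
  have hp₀ : 0 ≤ p := by linarith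
  have hdes : t ^ d ≤ t ^ e * p ^ s :=
    calc t ^ d ≤ t ^ (e + s) := pow_le_pow_right₀ ht hd
      _ = t ^ e * t ^ s := pow_add _ _ _
      _ ≤ t ^ e * p ^ s := by gcongr
  have hc' : (t ^ d)⁻¹ ≤ t ^ (-(d : ℝ) + c) := by
    rw [← Real.rpow_natCast, ← Real.rpow_neg ht₀.le]
    exact Real.rpow_le_rpow_of_exponent_le ht (by linarith)
  calc p ^ d / t ^ e ≤ p ^ (d + s) / t ^ d := by
        rw [div_le_div_iff₀ (by positivity) (by positivity), pow_add, mul_assoc]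
        exact mul_le_mul_of_nonneg_left (by linarith) (pow_nonneg hp₀ _)
    _ ≤ p ^ (d + s) * t ^ (-(d : ℝ) + c) := by
        rw [div_eq_mul_inv]
        exact mul_le_mul_of_nonneg_left hc' (pow_nonneg hp₀ _)

open Classical in
theorem card_filter_card_eq_sum_card_richWithSupport {ι : Type*} [Fintype ι] [DecidableEq ι]
    (p k s₁ s₂ t d : ℕ) [NeZero p] :
    #({a | #({i | a i ≠ 0} : Finset ι) = d ∧ IsRich p k s₁ s₂ t a} : Finset (ι → ZMod p)) =
      ∑ F ∈ powersetCard d (univ : Finset ι), #(richWithSupport p k s₁ s₂ t F) := by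
  rw [card_eq_sum_card_fiberwise (f := fun a => ({i | a i ≠ 0} : Finset ι))
    fun a ha => mem_powersetCard.2 ⟨subset_univ _, (mem_filter.1 ha).2.1⟩]
  refine sum_congr rfl fun F hF => congrArg card ?_
  ext a
  simp only [mem_filter, mem_univ, true_and, mem_richWithSupport]
  constructor
  · rintro ⟨⟨-, h⟩, rfl⟩; exact ⟨rfl, h⟩
  · rintro ⟨rfl, h⟩; exact ⟨⟨(mem_powersetCard.1 hF).2, h⟩, rfl⟩

theorem stmt_10_general {p n k s₁ s₂ d t : ℕ}
    (hs₁ : 1 ≤ s₁) (hs₁₂ : s₁ ≤ s₂)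
    (ht1 : 1 ≤ t) (htp : t ≤ p) :
    (Nat.card {a : Fin n → ZMod p |
        (Finset.univ.filter (fun i => a i ≠ 0)).card = d ∧
        ∀ S : Finset (Fin n), S ⊆ Finset.univ.filter (fun i => a i ≠ 0) →
          s₁ ≤ S.card → S.card ≤ s₂ →
          (t : ℝ) * 2 ^ (2 * k) * (S.card : ℝ) ^ (2 * k) / p ≤
            RkStar p k (fun i : S => a i)} : ℝ) ≤
      (n.choose d : ℝ) * (p : ℝ) ^ (d + s₂) *
        (t : ℝ) ^ (-(d : ℝ) + ((s₁ : ℝ) / s₂) * d) := by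
  have : NeZero p := ⟨by omega⟩
  classical
  rw [Nat.card_eq_card_toFinset, Set.toFinset_ofPred]
  calc _ = ∑ F ∈ powersetCard d univ, (#(richWithSupport p k s₁ s₂ t F) : ℝ) := by
        rw [← Nat.cast_sum, ← card_filter_card_eq_sum_card_richWithSupport]
        exact congrArg (Nat.cast ∘ card) (filter_congr fun _ _ => Iff.rfl)
    _ ≤ ∑ F ∈ powersetCard d (univ : Finset (Fin n)), (p : ℝ) ^ d / (t : ℝ) ^ (d + 1 - s₁) :=
        sum_le_sum fun F hF => (mem_powersetCard.1 hF).2 ▸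
          card_richWithSupport_le_div hs₁ hs₁₂ (by omega) F
    _ = n.choose d * ((p : ℝ) ^ d / (t : ℝ) ^ (d + 1 - s₁)) := by simp
    _ ≤ _ := by
        rw [mul_assoc]
        gcongr
        exact pow_div_pow_le_pow_mul_rpow (by exact_mod_cast ht1) (by exact_mod_cast htp)
          (by positivity) (by omega)

theorem stmt_10 {p n k s₁ s₂ d t : ℕ} (hp : p.Prime)
    (hs₁ : 1 ≤ s₁) (hs₁₂ : s₁ ≤ s₂) (hs₂ : s₂ ≤ n) (hd : d ≤ n)
    (ht1 : 1 ≤ t) (htp : t ≤ p) :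
    (Nat.card {a : Fin n → ZMod p |
        (Finset.univ.filter (fun i => a i ≠ 0)).card = d ∧
        ∀ S : Finset (Fin n), S ⊆ Finset.univ.filter (fun i => a i ≠ 0) →
          s₁ ≤ S.card → S.card ≤ s₂ →
          (t : ℝ) * 2 ^ (2 * k) * (S.card : ℝ) ^ (2 * k) / p ≤
            RkStar p k (fun i : S => a i)} : ℝ) ≤
      (n.choose d : ℝ) * (p : ℝ) ^ (d + s₂) *
        (t : ℝ) ^ (-(d : ℝ) + ((s₁ : ℝ) / s₂) * d) :=
  stmt_10_general hs₁ hs₁₂ ht1 htp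
end

section
/- For all 0 ≤ μ ≤ 1/2 and all real x and prime (or positive integer) p, μ + (1−μ)·cos(πx/p) ≤ exp(−(1/2)·‖x/p‖²), where ‖·‖ denotes distance to the nearest integer. -/
theorem stmt_12 (μ x : ℝ) (hμ0 : 0 ≤ μ) (hμ : μ ≤ 1 / 2) (p : ℕ) (hp : 0 < p) :
    μ + (1 - μ) * Real.cos (Real.pi * x / p) ≤
      Real.exp (-(1 / 2) * |x / p - round (x / p)| ^ 2) := by
  have hp' : (0:ℝ) < p := by exact_mod_cast hp
  set y : ℝ := x / p with hy
  set n : ℤ := round y with hn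
  set δ : ℝ := y - n with hδdef
  have habs : |δ| ≤ 1/2 := abs_sub_round y
  rw [show |y - (n:ℝ)| ^ 2 = δ ^ 2 from sq_abs δ]
  have hπ := Real.pi_pos
  have harg : Real.pi * x / p = Real.pi * δ + (n:ℝ) * Real.pi := by
    rw [hδdef, hy]; field_simp; ring
  have hcos_eq : Real.cos (Real.pi * x / p) = (-1:ℝ)^n * Real.cos (Real.pi * δ) := by
    rw [harg, Real.cos_add_int_mul_pi]
  have hδle : |Real.pi * δ| ≤ Real.pi / 2 := by
    rw [abs_mul, abs_of_pos hπ]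
    nlinarith
  have hcos_nonneg : 0 ≤ Real.cos (Real.pi * δ) := by
    apply Real.cos_nonneg_of_mem_Icc
    constructor
    · linarith [abs_le.mp hδle |>.1]
    · linarith [abs_le.mp hδle |>.2]
  have hcos_le : Real.cos (Real.pi * δ) ≤ 1 - 2 / Real.pi ^ 2 * (Real.pi * δ) ^ 2 := by
    apply Real.cos_le_one_sub_mul_cos_sq
    linarith
  have hcb : Real.cos (Real.pi * δ) ≤ 1 - 2 * δ ^ 2 := by
    have : 2 / Real.pi ^ 2 * (Real.pi * δ) ^ 2 = 2 * δ ^ 2 := by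
      field_simp
    linarith [hcos_le, this ▸ hcos_le]
  have hpow : (-1:ℝ)^n ≤ 1 := by
    rcases Int.even_or_odd n with he | ho
    · rw [he.neg_one_zpow]
    · rw [ho.neg_one_zpow]; norm_num
  have hcos_le' : Real.cos (Real.pi * x / p) ≤ Real.cos (Real.pi * δ) := by
    rw [hcos_eq]
    nlinarith
  have hcos1 : Real.cos (Real.pi * x / p) ≤ 1 := Real.cos_le_one _
  have hexp : 1 - (1/2) * δ^2 ≤ Real.exp (-(1/2) * δ^2) := by
    have h := Real.add_one_le_exp (-(1/2) * δ^2)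
    linarith
  have key : μ + (1 - μ) * Real.cos (Real.pi * x / p) ≤
      (1 + Real.cos (Real.pi * x / p)) / 2 := by
    nlinarith [mul_nonneg (by linarith : (0:ℝ) ≤ 1/2 - μ)
      (by linarith : (0:ℝ) ≤ 1 - Real.cos (Real.pi * x / p))]
  clear_value y n δ
  linarith [sq_nonneg δ]
end
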